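/- arXiv:2104.11332 — 4 statements merged into one kernel-verified Lean document; each statement's English description precedes it below -/
import Mathlib

section
/- If ξ₁, ξ₂ : ℝ → ℝ are differentiable functions satisfying ξ̇ᵢ(t) + α(ξᵢ(t)) ≥ 0 for i = 1,2 with α monotone increasing, then h(t) = min(ξ₁(t), ξ₂(t)) satisfies the barrier condition in the lower Dini derivative sense: D⁻h(t) + α(h(t)) ≥ 0 for all t. -/
open Filter

/-- Lower (right) Dini derivative. -/
noncomputable def lowerDini (h : ℝ → ℝ) (t : ℝ) : ℝ :=
  liminf (fun s => (h (t + s) - h t) / s) (nhdsWithin 0 (Set.Ioi 0))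

/-!
At every `t` the right derivative of `min ξ₁ ξ₂` exists and equals the derivative of a function
attaining the minimum at `t`: away from ties the minimum locally coincides with one of them, and
at a tie the difference quotients of the minimum are the minima of the difference quotients.
The barrier inequality of that active function is then the claim.
-/

open Set Topology

section

variable {f g : ℝ → ℝ} {f' g' t : ℝ}

theorem HasDerivWithinAt.tendsto_slope_zero_right (h : HasDerivWithinAt f f' (Ioi t) t) :
    Tendsto (fun s => (f (t + s) - f t) / s) (𝓝[>] 0) (𝓝 f') := by
  rw [hasDerivWithinAt_iff_tendsto_slope' self_notMem_Ioi, ← add_zero t,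
    ← map_add_left_nhdsGT, tendsto_map'_iff] at h
  simpa [Function.comp_def, slope, div_eq_inv_mul] using h

theorem HasDerivWithinAt.lowerDini_eq (h : HasDerivWithinAt f f' (Ioi t) t) :
    lowerDini f t = f' :=
  h.tendsto_slope_zero_right.liminf_eq

theorem HasDerivWithinAt.min_of_lt {s : Set ℝ} (hf : HasDerivWithinAt f f' s t)
    (hg : ContinuousWithinAt g s t) (hlt : f t < g t) :
    HasDerivWithinAt (fun x => min (f x) (g x)) f' s t := by
  refine hf.congr_of_eventuallyEq ?_ (min_eq_left hlt.le)
  filter_upwards [hf.continuousWithinAt.eventually_lt hg hlt] with x hx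
  exact min_eq_left hx.le

theorem HasDerivWithinAt.min_of_eq (hf : HasDerivWithinAt f f' (Ioi t) t)
    (hg : HasDerivWithinAt g g' (Ioi t) t) (heq : f t = g t) :
    HasDerivWithinAt (fun x => min (f x) (g x)) (min f' g') (Ioi t) t := by
  rw [hasDerivWithinAt_iff_tendsto_slope' self_notMem_Ioi] at hf hg ⊢
  refine (hf.min hg).congr' ?_
  filter_upwards [self_mem_nhdsWithin] with x hx
  simp only [slope_def_field, heq, min_self]
  rw [min_div_div_right (sub_nonneg.2 (le_of_lt hx)), min_sub_sub_right]

theorem HasDerivWithinAt.exists_min_Ioi (hf : HasDerivWithinAt f f' (Ioi t) t)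
    (hg : HasDerivWithinAt g g' (Ioi t) t) :
    ∃ d, HasDerivWithinAt (fun x => min (f x) (g x)) d (Ioi t) t ∧
      (min (f t) (g t) = f t ∧ d = f' ∨ min (f t) (g t) = g t ∧ d = g') := by
  rcases lt_trichotomy (f t) (g t) with hlt | heq | hgt
  · exact ⟨f', hf.min_of_lt hg.continuousWithinAt hlt, .inl ⟨min_eq_left hlt.le, rfl⟩⟩
  · refine ⟨min f' g', hf.min_of_eq hg heq, ?_⟩
    rcases min_cases f' g' with ⟨hd, -⟩ | ⟨hd, -⟩
    · exact .inl ⟨min_eq_left heq.le, hd⟩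
    · exact .inr ⟨heq ▸ min_self _, hd⟩
  · refine ⟨g', ?_, .inr ⟨min_eq_right hgt.le, rfl⟩⟩
    simpa only [min_comm] using hg.min_of_lt hf.continuousWithinAt hgt

end

theorem min_barrier_dini_general (ξ₁ ξ₂ : ℝ → ℝ)
    (hξ₁ : Differentiable ℝ ξ₁) (hξ₂ : Differentiable ℝ ξ₂)
    (α : ℝ → ℝ)
    (h₁ : ∀ t, deriv ξ₁ t + α (ξ₁ t) ≥ 0)
    (h₂ : ∀ t, deriv ξ₂ t + α (ξ₂ t) ≥ 0) :
    ∀ t, lowerDini (fun s => min (ξ₁ s) (ξ₂ s)) t + α (min (ξ₁ t) (ξ₂ t)) ≥ 0 := by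
  intro t
  obtain ⟨d, hd, ⟨hmin, rfl⟩ | ⟨hmin, rfl⟩⟩ :=
    (hξ₁ t).hasDerivAt.hasDerivWithinAt.exists_min_Ioi (hξ₂ t).hasDerivAt.hasDerivWithinAt
  · rw [hd.lowerDini_eq, hmin]
    exact h₁ t
  · rw [hd.lowerDini_eq, hmin]
    exact h₂ t

/-- If `ξ₁, ξ₂ : ℝ → ℝ` are differentiable and satisfy
`ξ̇ᵢ(t) + α(ξᵢ(t)) ≥ 0` with `α` monotone increasing, then
`h(t) = min(ξ₁(t), ξ₂(t))` satisfies `D⁻h(t) + α(h(t)) ≥ 0` for all `t`. -/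
theorem min_barrier_dini (ξ₁ ξ₂ : ℝ → ℝ)
    (hξ₁ : Differentiable ℝ ξ₁) (hξ₂ : Differentiable ℝ ξ₂)
    (α : ℝ → ℝ) (hα : Monotone α)
    (h₁ : ∀ t, deriv ξ₁ t + α (ξ₁ t) ≥ 0)
    (h₂ : ∀ t, deriv ξ₂ t + α (ξ₂ t) ≥ 0) :
    ∀ t, lowerDini (fun s => min (ξ₁ s) (ξ₂ s)) t + α (min (ξ₁ t) (ξ₂ t)) ≥ 0 :=
  min_barrier_dini_general ξ₁ ξ₂ hξ₁ hξ₂ α h₁ h₂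
end

section
/- For the double integrator with u ∈ [−u_max, u_max], the set {(s,v) : h(s,v) ≥ 0} with h(s,v) = C − s − max(v,0)²/(2 u_max) is exactly the maximal set of initial conditions from which the constraint s(t) ≤ C can be satisfied for all t ≥ 0: if h(s₀,v₀) < 0 (with v₀ > 0), then every admissible trajectory from (s₀,v₀) violates s ≤ C at some time. -/
/-! The braking bound `u ≥ -u_max` gives `v(t) ≥ v₀ - u_max t`, and integrating once more
`s(t) ≥ s₀ + v₀ t - u_max t² / 2`. At the braking time `t = v₀ / u_max` this lower bound is
`s₀ + v₀² / (2 u_max)`, which exceeds `C` exactly when `h(s₀, v₀) < 0`. -/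

section BrakingBounds

variable {s v u : ℝ → ℝ} {a : ℝ}

theorem sub_mul_sub_le_of_hasDerivAt_ge (hv : ∀ t, HasDerivAt v (u t) t) (hu : ∀ t, -a ≤ u t)
    {x y : ℝ} (hxy : x ≤ y) : v x - a * (y - x) ≤ v y := by
  have hderiv : ∀ t, -a ≤ deriv v t := fun t => (hv t).deriv ▸ hu t
  have := mul_sub_le_image_sub_of_le_deriv (fun t => (hv t).differentiableAt) hderiv hxy
  linarith

theorem add_mul_sub_sq_le_of_hasDerivAt_ge (hs : ∀ t, HasDerivAt s (v t) t)
    (hv : ∀ t, HasDerivAt v (u t) t) (hu : ∀ t, -a ≤ u t) {x y : ℝ} (hxy : x ≤ y) :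
    s x + v x * (y - x) - a * (y - x) ^ 2 / 2 ≤ s y := by
  set g : ℝ → ℝ := fun t => s t - v x * (t - x) + a * (t - x) ^ 2 / 2
  have hg : ∀ t, HasDerivAt g (v t - v x + a * (t - x)) t := fun t => by
    have hshift := (hasDerivAt_id t).sub_const x
    exact ((hs t).sub (hshift.const_mul (v x))).add ((hshift.pow 2).const_mul a |>.div_const 2)
      |>.congr_deriv (by simp only [id, Nat.cast_ofNat, mul_one]; ring)
  have hmono : MonotoneOn g (Set.Ici x) := by
    refine monotoneOn_of_hasDerivWithinAt_nonneg (convex_Ici x)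
      (fun t _ => (hg t).continuousAt.continuousWithinAt) (fun t _ => (hg t).hasDerivWithinAt) ?_
    intro t ht
    rw [interior_Ici] at ht
    linarith [sub_mul_sub_le_of_hasDerivAt_ge hv hu (le_of_lt ht)]
  have := hmono Set.self_mem_Ici hxy hxy
  simp only [g, sub_self, mul_zero, sub_zero, ne_eq, OfNat.ofNat_ne_zero, not_false_eq_true,
    zero_pow, zero_div, add_zero] at this
  linarith

theorem add_sq_div_le_braking_time (hs : ∀ t, HasDerivAt s (v t) t)
    (hv : ∀ t, HasDerivAt v (u t) t) (hu : ∀ t, -a ≤ u t) (ha : 0 < a) (hv0 : 0 ≤ v 0) :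
    s 0 + v 0 ^ 2 / (2 * a) ≤ s (v 0 / a) := by
  have hbound := add_mul_sub_sq_le_of_hasDerivAt_ge hs hv hu (div_nonneg hv0 ha.le)
  have hstop : v 0 * (v 0 / a - 0) - a * (v 0 / a - 0) ^ 2 / 2 = v 0 ^ 2 / (2 * a) := by
    field_simp
    ring
  linarith

end BrakingBounds

/-- For the double integrator with `u ∈ [−u_max, u_max]`, the set
`{h ≥ 0}` with `h(s,v) = C − s − max(v,0)²/(2 u_max)` is the maximal set of
initial conditions from which `s(t) ≤ C` can be maintained: if `h(s₀,v₀) < 0`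
(with `v₀ > 0`), then every admissible trajectory from `(s₀,v₀)` violates
`s ≤ C` at some time. -/
theorem double_integrator_maximality (umax C : ℝ) (humax : 0 < umax)
    (s v u : ℝ → ℝ)
    (hu : ∀ t, |u t| ≤ umax)
    (hs : ∀ t, HasDerivAt s (v t) t)
    (hv : ∀ t, HasDerivAt v (u t) t)
    (hv0 : 0 < v 0)
    (hh0 : C - s 0 - (max (v 0) 0) ^ 2 / (2 * umax) < 0) :
    ∃ t ≥ (0:ℝ), s t > C := by
  rw [max_eq_left hv0.le] at hh0
  have hbrake : ∀ t, -umax ≤ u t := fun t => (abs_le.mp (hu t)).1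
  refine ⟨v 0 / umax, div_nonneg hv0.le humax.le, ?_⟩
  linarith [add_sq_div_le_braking_time hs hv hbrake humax hv0.le]
end

section
/- If the backup policy π keeps S₀ invariant and satisfies ∇h_S(x)·f_π(x) + α(h_S(x)) ≥ 0 on S₀, then whenever h(x(t)) ≥ 0, the choice u = π(x(t)) satisfies all the backup-CBF QP constraints: for every τ ∈ [t, t+T], d/dt[h_C(Φ(x(t), τ−t))] = 0 ≥ −α(h_C(Φ(x(t),τ−t))), and d/dt[h_S(Φ(x(t), T))] + α(h_S(Φ(x(t),T))) ≥ 0. -/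
/-! By the semigroup law, moving the initial point of the backup flow along its vector field `F`
has the same first-order effect as advancing time: `DΦ(y, r)(F y, 0) = F (Φ y r) = DΦ(y, r)(0, 1)`.
Hence, when `x` follows the backup policy, `s ↦ Φ (x s) (θ s)` has derivative
`(1 + θ') • F (Φ (x t) (θ t))`. For `θ s = τ - s` this vanishes, and `h_C ≥ 0` at `Φ (x t) (τ - t)`
because `h(x t) ≥ 0`; for `θ = T` it is the field at `Φ (x t) T ∈ S₀`, where the CBF condition
on `h_S` is exactly the terminal constraint. -/

open Set

section Flow

variable {E : Type*} [NormedAddCommGroup E] [NormedSpace ℝ E]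
  {Φ : E → ℝ → E} {F : E → E}

theorem fderiv_flow_apply_field (hΦ0 : ∀ y, Φ y 0 = y)
    (hΦadd : ∀ y a b, Φ (Φ y a) b = Φ y (a + b))
    (hflow : ∀ y t, HasDerivAt (Φ y) (F (Φ y t)) t) {y : E} {r : ℝ}
    (hΦd : DifferentiableAt ℝ (fun p : E × ℝ => Φ p.1 p.2) (y, r)) :
    fderiv ℝ (fun p : E × ℝ => Φ p.1 p.2) (y, r) (F y, 0) = F (Φ y r) := by
  have hcurve : HasDerivAt (fun s => (Φ y s, r)) (F y, (0 : ℝ)) 0 := by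
    simpa [hΦ0] using (hflow y 0).prodMk (hasDerivAt_const (0 : ℝ) r)
  have hchain : HasDerivAt (fun s => Φ (Φ y s) r)
      (fderiv ℝ (fun p : E × ℝ => Φ p.1 p.2) (y, r) (F y, 0)) 0 := by
    have hΦd' : HasFDerivAt (fun p : E × ℝ => Φ p.1 p.2)
        (fderiv ℝ (fun p : E × ℝ => Φ p.1 p.2) (y, r)) (Φ y 0, r) := by
      rw [hΦ0]
      exact hΦd.hasFDerivAt
    exact hΦd'.comp_hasDerivAt 0 hcurve
  have htime : HasDerivAt (fun s => Φ (Φ y s) r) (F (Φ y r)) 0 := by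
    simp only [hΦadd]
    simpa using (hflow y (0 + r)).comp_add_const 0 r
  exact hchain.unique htime

theorem hasDerivAt_flow_comp (hΦ0 : ∀ y, Φ y 0 = y)
    (hΦadd : ∀ y a b, Φ (Φ y a) b = Φ y (a + b))
    (hflow : ∀ y t, HasDerivAt (Φ y) (F (Φ y t)) t)
    (hΦd : Differentiable ℝ (fun p : E × ℝ => Φ p.1 p.2))
    {x : ℝ → E} {θ : ℝ → ℝ} {a t : ℝ} (hx : HasDerivAt x (F (x t)) t)
    (hθ : HasDerivAt θ a t) :
    HasDerivAt (fun s => Φ (x s) (θ s)) ((1 + a) • F (Φ (x t) (θ t))) t := by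
  have hchain := (hΦd (x t, θ t)).hasFDerivAt.comp_hasDerivAt t (hx.prodMk hθ)
  have hsplit : ((F (x t), a) : E × ℝ) = (F (x t), 0) + a • ((0 : E), (1 : ℝ)) := by
    simp
  have htime :
      fderiv ℝ (fun p : E × ℝ => Φ p.1 p.2) (x t, θ t) (0, 1) = F (Φ (x t) (θ t)) := by
    simpa using ((hΦd (x t, θ t)).hasFDerivAt.comp_hasDerivAt (θ t)
      ((hasDerivAt_const (θ t) (x t)).prodMk (hasDerivAt_id (θ t)))).unique (hflow (x t) (θ t))
  rw [hsplit, map_add, map_smul, htime,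
    fderiv_flow_apply_field hΦ0 hΦadd hflow (hΦd _)] at hchain
  rwa [add_smul, one_smul]

end Flow

theorem IsCompact.ciInf_le_of_continuousOn {X : Type*} [TopologicalSpace X] {K : Set X}
    {φ : X → ℝ} {r : X} (hK : IsCompact K) (hφ : ContinuousOn φ K) (hr : r ∈ K) :
    ⨅ τ : K, φ τ ≤ φ r := by
  have hbdd : BddBelow (range fun τ : K => φ τ) := by
    rw [← image_eq_range]
    exact hK.bddBelow_image hφ
  exact ciInf_le hbdd ⟨r, hr⟩

theorem backup_policy_feasible_general {n m : ℕ}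
    (f : EuclideanSpace ℝ (Fin n) → EuclideanSpace ℝ (Fin n))
    (g : EuclideanSpace ℝ (Fin n) → (Fin m → ℝ) → EuclideanSpace ℝ (Fin n))
    (π : EuclideanSpace ℝ (Fin n) → (Fin m → ℝ))
    (Φ : EuclideanSpace ℝ (Fin n) → ℝ → EuclideanSpace ℝ (Fin n))
    (hΦ0 : ∀ y, Φ y 0 = y)
    (hΦadd : ∀ y a b, Φ (Φ y a) b = Φ y (a + b))
    (hΦC1 : ContDiff ℝ 1 (fun p : EuclideanSpace ℝ (Fin n) × ℝ => Φ p.1 p.2))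
    (hflow : ∀ y t, HasDerivAt (Φ y) (f (Φ y t) + g (Φ y t) (π (Φ y t))) t)
    (hC hS : EuclideanSpace ℝ (Fin n) → ℝ)
    (hCd : ContDiff ℝ 1 hC) (hSd : ContDiff ℝ 1 hS)
    (α : ℝ → ℝ) (hαmono : StrictMono α) (hα0 : α 0 = 0)
    (S₀ : Set (EuclideanSpace ℝ (Fin n))) (hS₀def : S₀ = {y | 0 ≤ hS y})
    (hS₀cbf : ∀ y ∈ S₀, fderiv ℝ hS y (f y + g y (π y)) + α (hS y) ≥ 0)
    (T : ℝ)
    (x : ℝ → EuclideanSpace ℝ (Fin n))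
    (hx : ∀ t, HasDerivAt x (f (x t) + g (x t) (π (x t))) t)
    (t : ℝ)
    (hh : 0 ≤ min (⨅ τ : Set.Icc (0:ℝ) T, hC (Φ (x t) τ)) (hS (Φ (x t) T))) :
    (∀ τ ∈ Set.Icc t (t + T),
        HasDerivAt (fun s => hC (Φ (x s) (τ - s))) 0 t ∧
        (0:ℝ) ≥ -α (hC (Φ (x t) (τ - t)))) ∧
    ∃ d : ℝ, HasDerivAt (fun s => hS (Φ (x s) T)) d t ∧
        d + α (hS (Φ (x t) T)) ≥ 0 := by
  have hΦd := hΦC1.differentiable one_ne_zero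
  have hflow_comp := fun {θ : ℝ → ℝ} {a : ℝ} (hθ : HasDerivAt θ a t) =>
    hasDerivAt_flow_comp (F := fun y => f y + g y (π y)) hΦ0 hΦadd hflow hΦd (hx t) hθ
  have hterminal : Φ (x t) T ∈ S₀ := hS₀def ▸ hh.trans (min_le_right _ _)
  refine ⟨fun τ ⟨hτt, hτT⟩ => ⟨?_, ?_⟩, ⟨_, ?_, hS₀cbf _ hterminal⟩⟩
  · have hfrozen := hflow_comp ((hasDerivAt_id t).const_sub τ)
    simpa [Function.comp_def] using
      (hCd.differentiable one_ne_zero _).hasFDerivAt.comp_hasDerivAt t hfrozen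
  · have hcont : ContinuousOn (fun r => hC (Φ (x t) r)) (Icc 0 T) :=
      (hCd.continuous.comp (hΦC1.continuous.comp (Continuous.prodMk_right (x t)))).continuousOn
    have hC_nonneg : 0 ≤ hC (Φ (x t) (τ - t)) :=
      (hh.trans (min_le_left _ _)).trans
        (isCompact_Icc.ciInf_le_of_continuousOn hcont ⟨by linarith, by linarith⟩)
    linarith [hα0 ▸ hαmono.monotone hC_nonneg]
  · simpa [Function.comp_def] using
      (hSd.differentiable one_ne_zero _).hasFDerivAt.comp_hasDerivAt t
        (hflow_comp (hasDerivAt_const t T))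

/-- If the backup policy `π` keeps `S₀` invariant and satisfies
`∇h_S·f_π + α(h_S) ≥ 0` on `S₀`, then whenever `h(x(t)) ≥ 0` (for the backup
CBF `h`), the choice `u = π(x(t))` satisfies all backup-CBF QP constraints:
for every `τ ∈ [t, t+T]`, `d/dt[h_C(Φ(x(t), τ−t))] = 0 ≥ −α(h_C(Φ(x(t),τ−t)))`,
and `d/dt[h_S(Φ(x(t), T))] + α(h_S(Φ(x(t),T))) ≥ 0`. -/
theorem backup_policy_feasible {n m : ℕ}
    (f : EuclideanSpace ℝ (Fin n) → EuclideanSpace ℝ (Fin n))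
    (g : EuclideanSpace ℝ (Fin n) → (Fin m → ℝ) → EuclideanSpace ℝ (Fin n))
    (U : Set (Fin m → ℝ))
    (π : EuclideanSpace ℝ (Fin n) → (Fin m → ℝ)) (hπU : ∀ y, π y ∈ U)
    (Φ : EuclideanSpace ℝ (Fin n) → ℝ → EuclideanSpace ℝ (Fin n))
    (hΦ0 : ∀ y, Φ y 0 = y)
    (hΦadd : ∀ y a b, Φ (Φ y a) b = Φ y (a + b))
    (hΦC1 : ContDiff ℝ 1 (fun p : EuclideanSpace ℝ (Fin n) × ℝ => Φ p.1 p.2))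
    (hflow : ∀ y t, HasDerivAt (Φ y) (f (Φ y t) + g (Φ y t) (π (Φ y t))) t)
    (hC hS : EuclideanSpace ℝ (Fin n) → ℝ)
    (hCd : ContDiff ℝ 1 hC) (hSd : ContDiff ℝ 1 hS)
    (α : ℝ → ℝ) (hαmono : StrictMono α) (hα0 : α 0 = 0)
    (S₀ : Set (EuclideanSpace ℝ (Fin n))) (hS₀def : S₀ = {y | 0 ≤ hS y})
    (hS₀inv : ∀ y ∈ S₀, ∀ t ≥ (0:ℝ), Φ y t ∈ S₀)
    (hS₀cbf : ∀ y ∈ S₀, fderiv ℝ hS y (f y + g y (π y)) + α (hS y) ≥ 0)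
    (T : ℝ) (hT : 0 < T)
    (x : ℝ → EuclideanSpace ℝ (Fin n))
    (hx : ∀ t, HasDerivAt x (f (x t) + g (x t) (π (x t))) t)
    (t : ℝ)
    (hh : 0 ≤ min (⨅ τ : Set.Icc (0:ℝ) T, hC (Φ (x t) τ)) (hS (Φ (x t) T))) :
    (∀ τ ∈ Set.Icc t (t + T),
        HasDerivAt (fun s => hC (Φ (x s) (τ - s))) 0 t ∧
        (0:ℝ) ≥ -α (hC (Φ (x t) (τ - t)))) ∧
    ∃ d : ℝ, HasDerivAt (fun s => hS (Φ (x s) T)) d t ∧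
        d + α (hS (Φ (x t) T)) ≥ 0 :=
  backup_policy_feasible_general f g π Φ hΦ0 hΦadd hΦC1 hflow hC hS hCd hSd α hαmono hα0 S₀ hS₀def
    hS₀cbf T x hx t hh
end

section
/- Let ξ̄ : ℝ × [t, t+T] → ℝ be C¹ and define ξ(s) = min_{τ ∈ [t,t+T]} ξ̄(s, τ). If for every τ ∈ [t, t+T], ∂ξ̄/∂s(s, τ) + α(ξ̄(s, τ)) ≥ 0 with α increasing, then the lower Dini derivative of ξ at s satisfies D⁻ξ(s) + α(ξ(s)) ≥ 0. -/
/-!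
Danskin's argument. If `τₕ` minimizes `ξ̄ (s + h) ·`, then
`ξ (s + h) - ξ s ≥ ξ̄ (s + h) τₕ - ξ̄ s τₕ = h ∂ₛξ̄ (σₕ, τₕ)` for some `σₕ ∈ (s, s + h)`.
By compactness the `τₕ` cluster only at minimizers `τ*` of `ξ̄ s ·`, so `D⁻ξ(s)` is at least
the least of the `∂ₛξ̄ (s, τ*)`, and at such a `τ*` the hypothesis reads
`∂ₛξ̄ (s, τ*) ≥ -α (ξ̄ s τ*) = -α (ξ s)`.
-/

open Filter

open Set Topology Function

lemma ciInf_eq_of_forall_le {ι L : Type*} [ConditionallyCompleteLattice L] {g : ι → L} {i : ι}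
    (hi : ∀ j, g i ≤ g j) : ⨅ j, g j = g i :=
  have : Nonempty ι := ⟨i⟩
  (show IsLeast (range g) (g i) from ⟨mem_range_self i, forall_mem_range.2 hi⟩).isGLB.ciInf_eq

lemma exists_mem_Ioo_hasDerivAt_eq_div {g g' : ℝ → ℝ} (hg : ∀ x, HasDerivAt g (g' x) x)
    {a h : ℝ} (hh : 0 < h) : ∃ σ ∈ Ioo a (a + h), g' σ = (g (a + h) - g a) / h := by
  obtain ⟨σ, hσ, heq⟩ := exists_hasDerivAt_eq_slope g g' (lt_add_of_pos_right a hh)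
    (fun x _ => (hg x).continuousAt.continuousWithinAt) (fun x _ => hg x)
  exact ⟨σ, hσ, by rwa [add_sub_cancel_left] at heq⟩

section Danskin

variable {γ X ι : Type*} [TopologicalSpace X] [TopologicalSpace ι]

lemma isClosed_setOf_isMinimizer {f : X → ι → ℝ} (hf : Continuous (uncurry f)) :
    IsClosed {p : X × ι | ∀ j, f p.1 p.2 ≤ f p.1 j} := by
  simp only [ofPred_forall]
  exact isClosed_iInter fun j => isClosed_le hf (hf.comp (continuous_fst.prodMk continuous_const))

/-- Upper semicontinuity of the argmin: along an ultrafilter the minimizers `i a` converge, and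
their limit is a minimizer at `x₀` because the argmin graph is closed. -/
lemma eventually_lt_of_forall_isMinimizer [CompactSpace ι] {f g : X → ι → ℝ}
    (hf : Continuous (uncurry f)) (hg : Continuous (uncurry g))
    {l : Filter γ} {x y : γ → X} {i : γ → ι} {x₀ : X}
    (hx : Tendsto x l (𝓝 x₀)) (hy : Tendsto y l (𝓝 x₀))
    (hi : ∀ a j, f (x a) (i a) ≤ f (x a) j) {c : ℝ}
    (hc : ∀ i₀, (∀ j, f x₀ i₀ ≤ f x₀ j) → c < g x₀ i₀) :
    ∀ᶠ a in l, c < g (y a) (i a) := by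
  by_contra hbad
  rw [not_eventually, frequently_iff_neBot] at hbad
  set U := Ultrafilter.of (l ⊓ 𝓟 {a | ¬c < g (y a) (i a)})
  have hUl : ↑U ≤ l := (Ultrafilter.of_le _).trans inf_le_left
  have hUbad : ∀ᶠ a in (U : Filter γ), g (y a) (i a) ≤ c :=
    Eventually.mono (le_principal_iff.1 ((Ultrafilter.of_le _).trans inf_le_right))
      fun _ => not_lt.1
  obtain ⟨i₀, -, hi₀⟩ := isCompact_univ.ultrafilter_le_nhds (U.map i) (by simp)
  have hmin : ∀ j, f x₀ i₀ ≤ f x₀ j :=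
    (isClosed_setOf_isMinimizer hf).mem_of_tendsto ((hx.mono_left hUl).prodMk_nhds hi₀)
      (Eventually.of_forall fun a => hi a)
  have hle : g x₀ i₀ ≤ c :=
    le_of_tendsto ((hg.tendsto _).comp ((hy.mono_left hUl).prodMk_nhds hi₀)) hUbad
  exact (hc i₀ hmin).not_ge hle

theorem le_lowerDini_iInf [CompactSpace ι] [Nonempty ι] {f f' : ℝ → ι → ℝ}
    (hf : Continuous (uncurry f)) (hf' : Continuous (uncurry f'))
    (hderiv : ∀ σ i, HasDerivAt (f · i) (f' σ i) σ) {s c : ℝ}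
    (hc : ∀ i, (∀ j, f s i ≤ f s j) → c ≤ f' s i) :
    c ≤ lowerDini (fun σ => ⨅ i, f σ i) s := by
  have hfσ : ∀ σ, Continuous (f σ) := fun σ => hf.comp (continuous_const.prodMk continuous_id)
  choose m hm using fun σ => (hfσ σ).exists_forall_le' (Classical.arbitrary ι) (by simp)
  have hξ : ∀ σ, ⨅ i, f σ i = f σ (m σ) := fun σ => ciInf_eq_of_forall_le (hm σ)
  have hmvt : ∀ h, ∃ σ, 0 < h → σ ∈ Ioo s (s + h) ∧
      f' σ (m (s + h)) = (f (s + h) (m (s + h)) - f s (m (s + h))) / h := fun h => by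
    by_cases hh : 0 < h
    · obtain ⟨σ, hσ, heq⟩ := exists_mem_Ioo_hasDerivAt_eq_div (fun σ => hderiv σ (m (s + h))) hh
      exact ⟨σ, fun _ => ⟨hσ, heq⟩⟩
    · exact ⟨s, fun h' => absurd h' hh⟩
  choose σ hσ using hmvt
  have hs : Tendsto (s + ·) (𝓝[>] (0 : ℝ)) (𝓝 s) :=
    ((continuous_const_add s).tendsto' 0 s (add_zero s)).mono_left nhdsWithin_le_nhds
  have hσs : Tendsto σ (𝓝[>] 0) (𝓝 s) := by
    refine tendsto_of_tendsto_of_tendsto_of_le_of_le' tendsto_const_nhds hs ?_ ?_ <;>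
      filter_upwards [self_mem_nhdsWithin] with h hh
    exacts [(hσ h hh).1.1.le, (hσ h hh).1.2.le]
  have hlower : ∀ h, 0 < h → f' (σ h) (m (s + h)) ≤ ((⨅ i, f (s + h) i) - ⨅ i, f s i) / h := by
    intro h hh
    rw [(hσ h hh).2, hξ, hξ]
    gcongr
    exact hm s _
  have hupper : ∀ h, 0 < h → ((⨅ i, f (s + h) i) - ⨅ i, f s i) / h ≤
      (f (s + h) (m s) - f s (m s)) / h := by
    intro h hh
    rw [hξ, hξ]
    gcongr
    exact hm _ _
  have hcob : IsCoboundedUnder (· ≥ ·) (𝓝[>] 0)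
      fun h => ((⨅ i, f (s + h) i) - ⨅ i, f s i) / h := by
    refine isCoboundedUnder_ge_of_eventually_le _ (x := f' s (m s) + 1) ?_
    filter_upwards [(hderiv s (m s)).tendsto_slope_zero_right.eventually
      (gt_mem_nhds (lt_add_one _)), self_mem_nhdsWithin] with h hslope hh
    rw [smul_eq_mul, inv_mul_eq_div] at hslope
    exact (hupper h hh).trans hslope.le
  refine le_of_forall_lt_imp_le_of_dense fun c' hc' => le_liminf_of_le hcob ?_
  filter_upwards [eventually_lt_of_forall_isMinimizer hf hf' hs hσs (fun h => hm (s + h))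
    (fun i hi => hc'.trans_le (hc i hi)), self_mem_nhdsWithin] with h hc'h hh
  exact hc'h.le.trans (hlower h hh)

end Danskin

theorem min_over_horizon_dini_general (t T : ℝ) (hT : 0 ≤ T)
    (ξb : ℝ → ℝ → ℝ)
    (hξb : ContDiff ℝ 1 (fun p : ℝ × ℝ => ξb p.1 p.2))
    (α : ℝ → ℝ)
    (s : ℝ)
    (hcond : ∀ τ ∈ Set.Icc t (t + T),
      deriv (fun s' => ξb s' τ) s + α (ξb s τ) ≥ 0) :
    lowerDini (fun s' => ⨅ τ : Set.Icc t (t + T), ξb s' τ) s +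
      α (⨅ τ : Set.Icc t (t + T), ξb s τ) ≥ 0 := by
  have : Nonempty (Icc t (t + T)) := (nonempty_Icc.2 (by linarith)).to_subtype
  set F : ℝ × ℝ → ℝ := fun p => ξb p.1 p.2
  have hpartial : ∀ σ τ, HasDerivAt (ξb · τ) (fderiv ℝ F (σ, τ) (1, 0)) σ := fun σ τ =>
    ((hξb.differentiable one_ne_zero _).hasFDerivAt.comp σ (hasFDerivAt_prodMk_left σ τ)).hasDerivAt
  have hrestrict : Continuous fun p : ℝ × Icc t (t + T) => (p.1, (p.2 : ℝ)) :=
    continuous_fst.prodMk (continuous_subtype_val.comp continuous_snd)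
  have hdini := le_lowerDini_iInf (f := fun σ (τ : Icc t (t + T)) => ξb σ τ)
    (f' := fun σ τ => fderiv ℝ F (σ, τ) (1, 0)) (hξb.continuous.comp hrestrict)
    (((hξb.continuous_fderiv one_ne_zero).comp hrestrict).clm_apply continuous_const)
    (fun σ τ => hpartial σ τ) (s := s) (c := -α (⨅ τ : Icc t (t + T), ξb s τ))
    fun τ hτ => by
      rw [ciInf_eq_of_forall_le hτ]
      have := hcond τ τ.2
      rw [(hpartial s τ).deriv] at this
      linarith
  linarith

/-- Let `ξ̄ : ℝ × [t, t+T] → ℝ` be C¹ and define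
`ξ(s) = min_{τ ∈ [t,t+T]} ξ̄(s, τ)`. If for every `τ ∈ [t, t+T]`,
`∂ξ̄/∂s(s, τ) + α(ξ̄(s, τ)) ≥ 0` with `α` increasing, then the lower Dini
derivative of `ξ` at `s` satisfies `D⁻ξ(s) + α(ξ(s)) ≥ 0`. -/
theorem min_over_horizon_dini (t T : ℝ) (hT : 0 ≤ T)
    (ξb : ℝ → ℝ → ℝ)
    (hξb : ContDiff ℝ 1 (fun p : ℝ × ℝ => ξb p.1 p.2))
    (α : ℝ → ℝ) (hα : Monotone α)
    (s : ℝ)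
    (hcond : ∀ τ ∈ Set.Icc t (t + T),
      deriv (fun s' => ξb s' τ) s + α (ξb s τ) ≥ 0) :
    lowerDini (fun s' => ⨅ τ : Set.Icc t (t + T), ξb s' τ) s +
      α (⨅ τ : Set.Icc t (t + T), ξb s τ) ≥ 0 :=
  min_over_horizon_dini_general t T hT ξb hξb α s hcond
end
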